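/- Let X = ℕ and let μ be the generalized topology generated by the base β = {{n, n+1} : n ∈ ℕ} (i.e., μ consists of ∅ and all unions of members of β). Then (X, μ) is nearly μ-paracompact but not nearly μ-compact; in particular, the family {{n, n+1} : n odd} is a μ-regular open cover of X with no finite subcover. -/

import Mathlib

open Set

/-- `μ` is a generalized topology on `X`: contains `∅` and closed under arbitrary unions. -/
def IsGT {X : Type} (μ : Set (Set X)) : Prop :=
  ∅ ∈ μ ∧ ∀ S ⊆ μ, ⋃₀ S ∈ μ

/-- μ-interior: union of all μ-open subsets of `A`. -/
def gInt {X : Type} (μ : Set (Set X)) (A : Set X) : Set X :=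
  ⋃₀ {V | V ∈ μ ∧ V ⊆ A}

/-- μ-closure: intersection of all μ-closed supersets of `A`. -/
def gCl {X : Type} (μ : Set (Set X)) (A : Set X) : Set X :=
  ⋂₀ {F | Fᶜ ∈ μ ∧ A ⊆ F}

/-- `A` is μ-regular open. -/
def RegOpen {X : Type} (μ : Set (Set X)) (A : Set X) : Prop :=
  A = gInt μ (gCl μ A)

/-- `A` is μ-regular closed. -/
def RegClosed {X : Type} (μ : Set (Set X)) (A : Set X) : Prop :=
  A = gCl μ (gInt μ A)

/-- Nearly μ-compact: every cover by μ-regular open sets has a finite subcover. -/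
def NearlyCompact {X : Type} (μ : Set (Set X)) : Prop :=
  ∀ C : Set (Set X), (∀ A ∈ C, RegOpen μ A) → ⋃₀ C = univ →
    ∃ t : Finset (Set X), ↑t ⊆ C ∧ ⋃₀ (t : Set (Set X)) = univ

def LocallyFiniteFam {X : Type} (μ : Set (Set X)) (ξ : Set (Set X)) : Prop :=
  ∀ x : X, ∃ V ∈ μ, x ∈ V ∧ {U ∈ ξ | (U ∩ V).Nonempty}.Finite

def NearlyParacompact {X : Type} (μ : Set (Set X)) : Prop :=
  ∀ C : Set (Set X), (∀ A ∈ C, RegOpen μ A) → ⋃₀ C = univ →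
    ∃ η : Set (Set X), (∀ U ∈ η, U ∈ μ) ∧ ⋃₀ η = univ ∧
      (∀ U ∈ η, ∃ V ∈ C, U ⊆ V) ∧ LocallyFiniteFam μ η

/-- The GT on the positive integers generated by the base of sets {n, n+1}. -/
def muEx10 : Set (Set ℕ+) :=
  {A | ∃ S : Set (Set ℕ+), (∀ B ∈ S, ∃ n : ℕ+, B = {n, n + 1}) ∧ A = ⋃₀ S}

/-- The cover by the sets {n, n+1} with n odd. -/
def oddCover : Set (Set ℕ+) :=
  {A | ∃ n : ℕ+, Odd (n : ℕ) ∧ A = {n, n + 1}}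

/-!
Every point `x` lies in the pair `{x, x + 1}`, and that pair meets only the three pairs starting
at `x - 1`, `x`, `x + 1`; so the base of pairs is μ-locally finite, and refining any μ-open cover
by the pairs inside its members gives a locally finite refinement. The pairs `{n, n + 1}` with
`n` odd partition the space, so each of them is μ-clopen, hence μ-regular open; being finite
sets covering an infinite space, no finitely many of them cover it.
-/

section GeneralizedTopology

variable {X : Type} {μ : Set (Set X)} {A : Set X}

lemma gInt_subset (μ : Set (Set X)) (A : Set X) : gInt μ A ⊆ A :=
  sUnion_subset fun _ hV => hV.2

lemma gInt_eq_self (hA : A ∈ μ) : gInt μ A = A :=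
  (gInt_subset μ A).antisymm (subset_sUnion_of_mem ⟨hA, subset_rfl⟩)

lemma gCl_eq_self (hA : Aᶜ ∈ μ) : gCl μ A = A :=
  (sInter_subset_of_mem (show A ∈ {F | Fᶜ ∈ μ ∧ A ⊆ F} from ⟨hA, subset_rfl⟩)).antisymm
    fun _ hx _ hF => hF.2 hx

lemma regOpen_of_mem_of_compl_mem (hA : A ∈ μ) (hAc : Aᶜ ∈ μ) : RegOpen μ A := by
  rw [RegOpen, gCl_eq_self hAc, gInt_eq_self hA]

lemma IsGT.mem_of_regOpen (hμ : IsGT μ) (hA : RegOpen μ A) : A ∈ μ := by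
  rw [hA]
  exact hμ.2 _ fun _ hV => hV.1

lemma LocallyFiniteFam.mono {ξ η : Set (Set X)} (hξ : LocallyFiniteFam μ ξ) (hηξ : η ⊆ ξ) :
    LocallyFiniteFam μ η := fun x =>
  let ⟨V, hV, hxV, hfin⟩ := hξ x
  ⟨V, hV, hxV, hfin.subset fun _ hU => ⟨hηξ hU.1, hU.2⟩⟩

lemma nearlyParacompact_of_locallyFiniteFam_base {𝓑 : Set (Set X)} (hμ : IsGT μ)
    (h𝓑μ : 𝓑 ⊆ μ) (h𝓑 : ∀ A ∈ μ, ∀ x ∈ A, ∃ B ∈ 𝓑, x ∈ B ∧ B ⊆ A)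
    (hlf : LocallyFiniteFam μ 𝓑) : NearlyParacompact μ := by
  intro C hC hcov
  refine ⟨{B ∈ 𝓑 | ∃ V ∈ C, B ⊆ V}, fun B hB => h𝓑μ hB.1, ?_, fun B hB => hB.2,
    hlf.mono fun B hB => hB.1⟩
  refine eq_univ_of_forall fun x => ?_
  obtain ⟨V, hVC, hxV⟩ := mem_sUnion.mp (hcov.symm ▸ mem_univ x)
  obtain ⟨B, hB𝓑, hxB, hBV⟩ := h𝓑 V (hμ.mem_of_regOpen (hC V hVC)) x hxV
  exact ⟨B, ⟨hB𝓑, V, hVC, hBV⟩, hxB⟩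

lemma not_exists_finite_subcover_of_finite [Infinite X] {C : Set (Set X)}
    (hC : ∀ A ∈ C, A.Finite) :
    ¬ ∃ t : Finset (Set X), ↑t ⊆ C ∧ ⋃₀ (t : Set (Set X)) = univ := by
  rintro ⟨t, htC, hcov⟩
  apply infinite_univ (α := X)
  rw [← hcov]
  exact t.finite_toSet.sUnion fun A hA => hC A (htC hA)

end GeneralizedTopology

section Pairs

lemma mem_pair_iff {x n : ℕ+} :
    x ∈ ({n, n + 1} : Set ℕ+) ↔ (x : ℕ) = n ∨ (x : ℕ) = n + 1 := by
  simp only [mem_insert_iff, mem_singleton_iff, ← PNat.coe_inj, PNat.add_coe, PNat.one_coe]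

lemma pair_mem_muEx10 (n : ℕ+) : ({n, n + 1} : Set ℕ+) ∈ muEx10 :=
  ⟨{{n, n + 1}}, by rintro B rfl; exact ⟨n, rfl⟩, (sUnion_singleton _).symm⟩

lemma mem_muEx10_iff {A : Set ℕ+} :
    A ∈ muEx10 ↔ ∀ x ∈ A, ∃ n : ℕ+, x ∈ ({n, n + 1} : Set ℕ+) ∧ {n, n + 1} ⊆ A := by
  constructor
  · rintro ⟨S, hS, rfl⟩ x ⟨B, hBS, hxB⟩
    obtain ⟨n, rfl⟩ := hS B hBS
    exact ⟨n, hxB, subset_sUnion_of_mem hBS⟩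
  · intro h
    refine ⟨{B | (∃ n : ℕ+, B = {n, n + 1}) ∧ B ⊆ A}, fun B hB => hB.1, ?_⟩
    refine (sUnion_subset fun B hB => hB.2).antisymm' fun x hx => ?_
    obtain ⟨n, hxn, hnA⟩ := h x hx
    exact ⟨_, ⟨⟨n, rfl⟩, hnA⟩, hxn⟩

lemma isGT_muEx10 : IsGT muEx10 := by
  refine ⟨⟨∅, fun _ h => h.elim, sUnion_empty.symm⟩, fun S hS => ?_⟩
  rw [mem_muEx10_iff]
  rintro x ⟨A, hAS, hxA⟩
  obtain ⟨n, hxn, hnA⟩ := mem_muEx10_iff.mp (hS hAS) x hxA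
  exact ⟨n, hxn, hnA.trans (subset_sUnion_of_mem hAS)⟩

lemma locallyFiniteFam_pairs :
    LocallyFiniteFam muEx10 {B | ∃ n : ℕ+, B = {n, n + 1}} := by
  intro x
  refine ⟨{x, x + 1}, pair_mem_muEx10 x, mem_pair_iff.mpr (Or.inl rfl), ?_⟩
  refine ((finite_Iic (x + 1)).image fun n : ℕ+ => ({n, n + 1} : Set ℕ+)).subset ?_
  rintro _ ⟨⟨n, rfl⟩, y, hyn, hyx⟩
  refine ⟨n, ?_, rfl⟩
  rw [mem_pair_iff] at hyn hyx
  rw [mem_Iic, ← PNat.coe_le_coe, PNat.add_coe, PNat.one_coe]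
  omega

lemma exists_odd_mem_pair (x : ℕ+) : ∃ n : ℕ+, Odd (n : ℕ) ∧ x ∈ ({n, n + 1} : Set ℕ+) := by
  rcases Nat.even_or_odd (x : ℕ) with ⟨k, hk⟩ | hx
  · have hx := x.pos
    refine ⟨⟨x - 1, by omega⟩, ⟨k - 1, by simp only [PNat.mk_coe]; omega⟩, ?_⟩
    exact mem_pair_iff.mpr (Or.inr (by simp only [PNat.mk_coe]; omega))
  · exact ⟨x, hx, mem_pair_iff.mpr (Or.inl rfl)⟩

lemma eq_of_mem_oddPair {m n x : ℕ+} (hm : Odd (m : ℕ)) (hn : Odd (n : ℕ))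
    (hxm : x ∈ ({m, m + 1} : Set ℕ+)) (hxn : x ∈ ({n, n + 1} : Set ℕ+)) : m = n := by
  obtain ⟨i, hi⟩ := hm
  obtain ⟨j, hj⟩ := hn
  rw [mem_pair_iff] at hxm hxn
  exact PNat.coe_injective (by omega)

lemma compl_oddPair_mem_muEx10 {n : ℕ+} (hn : Odd (n : ℕ)) :
    ({n, n + 1} : Set ℕ+)ᶜ ∈ muEx10 := by
  rw [mem_muEx10_iff]
  intro x hx
  obtain ⟨m, hm, hxm⟩ := exists_odd_mem_pair x
  refine ⟨m, hxm, fun y hym hyn => hx ?_⟩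
  rwa [← eq_of_mem_oddPair hm hn hym hyn]

lemma regOpen_of_mem_oddCover {A : Set ℕ+} (hA : A ∈ oddCover) : RegOpen muEx10 A := by
  obtain ⟨n, hn, rfl⟩ := hA
  exact regOpen_of_mem_of_compl_mem (pair_mem_muEx10 n) (compl_oddPair_mem_muEx10 hn)

lemma sUnion_oddCover : ⋃₀ oddCover = univ :=
  eq_univ_of_forall fun x =>
    let ⟨n, hn, hxn⟩ := exists_odd_mem_pair x
    ⟨_, ⟨n, hn, rfl⟩, hxn⟩

end Pairs

lemma nearlyParacompact_muEx10 : NearlyParacompact muEx10 := by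
  refine nearlyParacompact_of_locallyFiniteFam_base isGT_muEx10 ?_ ?_ locallyFiniteFam_pairs
  · rintro _ ⟨n, rfl⟩
    exact pair_mem_muEx10 n
  · intro A hA x hx
    obtain ⟨n, hxn, hnA⟩ := mem_muEx10_iff.mp hA x hx
    exact ⟨_, ⟨n, rfl⟩, hxn, hnA⟩

lemma not_exists_finite_subcover_oddCover :
    ¬ ∃ t : Finset (Set ℕ+), ↑t ⊆ oddCover ∧ ⋃₀ (t : Set (Set ℕ+)) = univ := by
  refine not_exists_finite_subcover_of_finite ?_
  rintro _ ⟨n, -, rfl⟩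
  exact toFinite _

theorem example10 :
    NearlyParacompact muEx10 ∧ ¬ NearlyCompact muEx10 ∧
    ((∀ A ∈ oddCover, RegOpen muEx10 A) ∧ ⋃₀ oddCover = univ ∧
      ¬ ∃ t : Finset (Set ℕ+), ↑t ⊆ oddCover ∧ ⋃₀ (t : Set (Set ℕ+)) = univ) := by
  have hreg : ∀ A ∈ oddCover, RegOpen muEx10 A := fun _ => regOpen_of_mem_oddCover
  exact ⟨nearlyParacompact_muEx10,
    fun h => not_exists_finite_subcover_oddCover (h oddCover hreg sUnion_oddCover),
    hreg, sUnion_oddCover, not_exists_finite_subcover_oddCover⟩
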